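/- In the 4-dimensional algebra 3A'_{α,β} over a field of characteristic ≠ 2 (with α ≠ 1/2), the linear maps τ(a₀) and τ(a₁) — where τ(a_i) fixes a_i and s and swaps the other two basis idempotents — are algebra automorphisms, and their product τ(a₀)τ(a₁) has order 3. -/

import Mathlib

noncomputable section

/-- Index type for the basis `a₀, a₁, a₂` (as `some i`, `i : ZMod 3`) and `s`
(as `none`) of the algebra `3A'_{α,β}`. -/
abbrev I3 : Type := Option (ZMod 3)

/-- Basis vectors. -/
def e3 (F : Type*) [Field F] (k : I3) : I3 → F := Pi.single k 1

open scoped Classical in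
/-- The Ising fusion rules `Φ(α,β)` of Table 1. -/
def isingStar (F : Type*) [Field F] (α β : F) (μ ν : F) : Set F :=
  if μ = β then (if ν = β then {1, 0, α} else {β})
  else if ν = β then {β}
  else if μ = α then (if ν = α then {1, 0} else {α})
  else if ν = α then {α}
  else if μ = ν then {μ}
  else ∅

open scoped Classical in
/-- Structure constants of `3A'_{α,β}`, indices mod 3, `s = a₀∘a₁`. -/
def T3A (F : Type*) [Field F] (α β : F) : I3 → I3 → (I3 → F) :=
  fun i j =>
    match i, j with
    | some i, some j =>
        if i = j then e3 F (some i)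
        else β • (e3 F (some i) + e3 F (some j)) + e3 F none
    | some i, none =>
        ((3 * α ^ 3 - 5 * α ^ 2 * β + 8 * α * β ^ 2 - 4 * α ^ 2 + 7 * α * β
            - 4 * β ^ 2 + α - 2 * β) / (4 * (1 - 2 * α))) • e3 F (some i)
          + (β * (α - β) / 2) • (e3 F (some (i + 1)) + e3 F (some (i + 2)))
          + (α - β) • e3 F none
    | none, some j =>
        ((3 * α ^ 3 - 5 * α ^ 2 * β + 8 * α * β ^ 2 - 4 * α ^ 2 + 7 * α * β
            - 4 * β ^ 2 + α - 2 * β) / (4 * (1 - 2 * α))) • e3 F (some j)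
          + (β * (α - β) / 2) • (e3 F (some (j + 1)) + e3 F (some (j + 2)))
          + (α - β) • e3 F none
    | none, none =>
        ((α - β) * (3 * α ^ 3 - 13 * α ^ 2 * β + 16 * α * β ^ 2 - 4 * α ^ 2
            + 11 * α * β - 8 * β ^ 2 + α - 2 * β) / (8 * (1 - 2 * α))) •
          (∑ k : ZMod 3, e3 F (some k))
          + ((9 * α ^ 3 - 27 * α ^ 2 * β + 12 * α * β ^ 2 - 6 * α ^ 2
            + 13 * α * β - 6 * β ^ 2 + α) / (4 * (2 * α - 1))) • e3 F none

/-- The bilinear multiplication of `3A'_{α,β}`. -/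
def mul3A (F : Type*) [Field F] (α β : F) :
    (I3 → F) →ₗ[F] (I3 → F) →ₗ[F] (I3 → F) :=
  LinearMap.mk₂ F (fun x y => ∑ i : I3, ∑ j : I3, (x i * y j) • T3A F α β i j)
    (fun x x' y => by simp [add_mul, add_smul, Finset.sum_add_distrib])
    (fun c x y => by simp [Finset.smul_sum, smul_smul, mul_assoc])
    (fun x y y' => by simp [mul_add, add_smul, Finset.sum_add_distrib])
    (fun c x y => by simp [Finset.smul_sum, smul_smul, mul_left_comm])

/-!
The structure constants of `3A'_{α,β}` are invariant under every permutation of `a₀, a₁, a₂`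
fixing `s`, since `a_{i+1} + a_{i+2} = (a₀ + a₁ + a₂) - a_i`; and permuting coordinates by a
symmetry of the structure constants is an algebra automorphism. The permutation representation on
`I3 → F` is faithful, so `τ(a₀)τ(a₁)` has the order of the 3-cycle `(a₀ a₂)(a₁ a₂)`.
-/

theorem ZMod.apply_add_one_add_apply_add_two_eq_sum_sub {M : Type*} [AddCommGroup M]
    (f : ZMod 3 → M) (i : ZMod 3) : f (i + 1) + f (i + 2) = ∑ k, f k - f i := by
  have hsum : ∑ k, f k = f (i + 0) + f (i + 1) + f (i + 2) :=
    (Equiv.sum_comp (Equiv.addLeft i) f).symm.trans (Fin.sum_univ_three _)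
  rw [hsum, add_zero]
  abel

section

variable {F : Type*} [Field F] (α β : F)

theorem e3_apply_perm (σ : Equiv.Perm I3) (a k : I3) : e3 F (σ a) (σ k) = e3 F a k := by
  simp only [e3, Pi.single_apply, σ.injective.eq_iff]

theorem T3A_optionCongr (g : Equiv.Perm (ZMod 3)) (i j k : I3) :
    T3A F α β (g.optionCongr i) (g.optionCongr j) (g.optionCongr k) = T3A F α β i j k := by
  set σ := g.optionCongr
  have he_none : e3 F none (σ k) = e3 F none k := e3_apply_perm σ none k
  have he_some : ∀ i, e3 F (some (g i)) (σ k) = e3 F (some i) k :=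
    fun i => e3_apply_perm σ (some i) k
  have he_sum : (∑ t, e3 F (some t)) (σ k) = (∑ t, e3 F (some t)) k := by
    simp only [Finset.sum_apply]
    rw [← Equiv.sum_comp g]
    simp only [he_some]
  have hnone : σ none = none := rfl
  have hsome : ∀ i, σ (some i) = some (g i) := fun _ => rfl
  rcases i with _ | i <;> rcases j with _ | j <;>
    simp only [hnone, hsome, T3A, g.injective.eq_iff, ite_apply, Pi.add_apply, Pi.smul_apply,
      Pi.sub_apply, ZMod.apply_add_one_add_apply_add_two_eq_sum_sub (fun t => e3 F (some t)),
      he_sum, he_none, he_some]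

theorem funCongrLeft_mul3A (σ : Equiv.Perm I3)
    (hσ : ∀ i j k, T3A F α β (σ i) (σ j) (σ k) = T3A F α β i j k) (x y : I3 → F) :
    LinearEquiv.funCongrLeft F F σ (mul3A F α β x y) =
      mul3A F α β (LinearEquiv.funCongrLeft F F σ x) (LinearEquiv.funCongrLeft F F σ y) := by
  funext k
  simp only [LinearEquiv.funCongrLeft_apply, LinearMap.funLeft_apply, mul3A,
    LinearMap.mk₂_apply, Finset.sum_apply, Pi.smul_apply, smul_eq_mul]
  refine Fintype.sum_equiv σ.symm _ _ fun i => Fintype.sum_equiv σ.symm _ _ fun j => ?_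
  rw [← hσ (σ.symm i) (σ.symm j) k]
  simp only [Equiv.apply_symm_apply]

theorem funCongrLeft_optionCongr_mul3A (g : Equiv.Perm (ZMod 3)) (x y : I3 → F) :
    LinearEquiv.funCongrLeft F F g.optionCongr (mul3A F α β x y) =
      mul3A F α β (LinearEquiv.funCongrLeft F F g.optionCongr x)
        (LinearEquiv.funCongrLeft F F g.optionCongr y) :=
  funCongrLeft_mul3A α β _ (T3A_optionCongr α β g) x y

end

@[simps]
def LinearEquiv.funCongrLeftInvHom (R ι : Type*) [Semiring R] :
    Equiv.Perm ι →* ((ι → R) ≃ₗ[R] (ι → R)) where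
  toFun σ := LinearEquiv.funCongrLeft R R σ⁻¹
  map_one' := LinearEquiv.funCongrLeft_id R R
  map_mul' σ τ := by
    rw [mul_inv_rev]
    exact LinearEquiv.funCongrLeft_comp R R _ _

theorem LinearEquiv.funCongrLeftInvHom_injective (R ι : Type*) [Semiring R] [Nontrivial R] :
    Function.Injective (LinearEquiv.funCongrLeftInvHom R ι) := by
  classical
  refine (injective_iff_map_eq_one _).2 fun σ hσ => Equiv.ext fun a => ?_
  have h := congrFun (LinearEquiv.congr_fun hσ (Pi.single a (1 : R))) (σ a)
  simp only [funCongrLeftInvHom_apply, funCongrLeft_apply, LinearMap.funLeft_apply,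
    Equiv.Perm.coe_inv, Equiv.symm_apply_apply, Pi.single_eq_same,
    LinearEquiv.coe_one, id_eq, Pi.single_apply] at h
  exact of_not_not fun hne => one_ne_zero (h.trans (if_neg hne))

theorem LinearEquiv.orderOf_funCongrLeft {R ι : Type*} [Semiring R] [Nontrivial R]
    (σ : Equiv.Perm ι) : orderOf (LinearEquiv.funCongrLeft R R σ) = orderOf σ := by
  rw [← orderOf_inv σ, ← orderOf_injective _ (funCongrLeftInvHom_injective R ι),
    funCongrLeftInvHom_apply, inv_inv]

theorem threeA_miyamoto_general (F : Type*) [Field F] (α β : F) :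
    (∀ x y : I3 → F,
      (LinearEquiv.funCongrLeft F F (Equiv.swap (some 1 : I3) (some 2)))
          (mul3A F α β x y) =
        mul3A F α β
          ((LinearEquiv.funCongrLeft F F (Equiv.swap (some 1 : I3) (some 2))) x)
          ((LinearEquiv.funCongrLeft F F (Equiv.swap (some 1 : I3) (some 2))) y)) ∧
    (∀ x y : I3 → F,
      (LinearEquiv.funCongrLeft F F (Equiv.swap (some 0 : I3) (some 2)))
          (mul3A F α β x y) =
        mul3A F α β
          ((LinearEquiv.funCongrLeft F F (Equiv.swap (some 0 : I3) (some 2))) x)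
          ((LinearEquiv.funCongrLeft F F (Equiv.swap (some 0 : I3) (some 2))) y)) ∧
    orderOf ((LinearEquiv.funCongrLeft F F (Equiv.swap (some 1 : I3) (some 2))) *
      (LinearEquiv.funCongrLeft F F (Equiv.swap (some 0 : I3) (some 2)))) = 3 := by
  refine ⟨?_, ?_, ?_⟩
  · simpa only [Equiv.optionCongr_swap] using funCongrLeft_optionCongr_mul3A α β (Equiv.swap 1 2)
  · simpa only [Equiv.optionCongr_swap] using funCongrLeft_optionCongr_mul3A α β (Equiv.swap 0 2)
  · rw [LinearEquiv.mul_eq_trans, ← LinearEquiv.funCongrLeft_comp,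
      LinearEquiv.orderOf_funCongrLeft, ← Equiv.Perm.mul_def, Equiv.swap_comm (some 0),
      Equiv.swap_comm (some 1)]
    exact (Equiv.Perm.isThreeCycle_swap_mul_swap_same (by decide) (by decide) (by decide)).orderOf

/-- On `3A'_{α,β}` (field of characteristic ≠ 2, `α ≠ 1/2`, `α ≠ β`), the linear maps
`τ(a₀)` (swapping `a₁, a₂`, fixing `a₀` and `s`) and `τ(a₁)` (swapping `a₀, a₂`,
fixing `a₁` and `s`) are algebra automorphisms, and their product has order 3. -/
theorem threeA_miyamoto (F : Type*) [Field F] (h2 : (2 : F) ≠ 0) (α β : F)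
    (hα : α ≠ 1 / 2) (hαβ : α ≠ β) :
    (∀ x y : I3 → F,
      (LinearEquiv.funCongrLeft F F (Equiv.swap (some 1 : I3) (some 2)))
          (mul3A F α β x y) =
        mul3A F α β
          ((LinearEquiv.funCongrLeft F F (Equiv.swap (some 1 : I3) (some 2))) x)
          ((LinearEquiv.funCongrLeft F F (Equiv.swap (some 1 : I3) (some 2))) y)) ∧
    (∀ x y : I3 → F,
      (LinearEquiv.funCongrLeft F F (Equiv.swap (some 0 : I3) (some 2)))
          (mul3A F α β x y) =
        mul3A F α β
          ((LinearEquiv.funCongrLeft F F (Equiv.swap (some 0 : I3) (some 2))) x)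
          ((LinearEquiv.funCongrLeft F F (Equiv.swap (some 0 : I3) (some 2))) y)) ∧
    orderOf ((LinearEquiv.funCongrLeft F F (Equiv.swap (some 1 : I3) (some 2))) *
      (LinearEquiv.funCongrLeft F F (Equiv.swap (some 0 : I3) (some 2)))) = 3 :=
  threeA_miyamoto_general F α β
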